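/- arXiv:1707.03038 — 2 statements merged into one kernel-verified Lean document; each statement's English description precedes it below -/
import Mathlib

section
/- The functions |m_ε'| are bounded in the Lorentz space L^{2,1}(H) uniformly in ε: in fact ‖|m_ε'|‖_{L^{2,1}(H)} ≤ 8√π for all ε > 0, where the L^{2,1} norm is 2∫₀^∞ μ(t)^{1/2} dt with μ(t) the Lebesgue measure of {z ∈ H : |m_ε'(z)| > t}. -/
/-!
On the upper half-plane `|z + iε| > ε`, so `|m_ε'(z)| = 2ε / |z + iε|²` never exceeds `2/ε`, and
`|m_ε'(z)| > t` forces `z` into the disc of radius `√(2ε/t)` about `-iε`. Hence the distribution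
function satisfies `μ(t) ≤ 2πε/t` and vanishes for `t ≥ 2/ε`, and integrating `√(2πε/t)` over
`(0, 2/ε]` gives `2√(2πε · 2/ε) = 4√π`.
-/

open Complex MeasureTheory Set

theorem integral_Ioc_rpow_neg_half {a : ℝ} (ha : 0 ≤ a) :
    ∫ t in Ioc 0 a, t ^ (-(1 / 2) : ℝ) = 2 * √a := by
  rw [← intervalIntegral.integral_of_le ha, integral_rpow (Or.inl (by norm_num)),
    Real.sqrt_eq_rpow, Real.zero_rpow (by norm_num)]
  norm_num
  ring

theorem integrableOn_Ioc_rpow_neg_half (a : ℝ) :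
    IntegrableOn (fun t : ℝ => t ^ (-(1 / 2) : ℝ)) (Ioc 0 a) := by
  rcases le_total 0 a with ha | ha
  · exact (intervalIntegrable_iff_integrableOn_Ioc_of_le ha).mp
      (intervalIntegral.intervalIntegrable_rpow' (by norm_num))
  · simp [Ioc_eq_empty_of_le ha]

theorem integral_sqrt_le_of_le_div {f : ℝ → ℝ} {C a : ℝ} (ha : 0 ≤ a)
    (hle : ∀ t, 0 < t → f t ≤ C / t) (hzero : ∀ t, a < t → f t = 0) :
    ∫ t in Ioi 0, √(f t) ≤ 2 * √(C * a) := by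
  set g : ℝ → ℝ := (Ioc 0 a).indicator fun t => √C * t ^ (-(1 / 2) : ℝ)
  have hfg : ∀ t ∈ Ioi (0 : ℝ), √(f t) ≤ g t := by
    intro t (ht : 0 < t)
    rcases le_or_gt t a with hta | hta
    · calc √(f t) ≤ √(C / t) := Real.sqrt_le_sqrt (hle t ht)
        _ = g t := by
          simp only [g]
          rw [indicator_of_mem (show t ∈ Ioc 0 a from ⟨ht, hta⟩), Real.sqrt_div' _ ht.le,
            div_eq_mul_inv, Real.rpow_neg ht.le, ← Real.sqrt_eq_rpow]
    · simp [g, hzero t hta, hta.not_ge]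
  have hg : Integrable g (volume.restrict (Ioi 0)) :=
    (IntegrableOn.integrable_indicator ((integrableOn_Ioc_rpow_neg_half a).const_mul √C)
      measurableSet_Ioc).restrict
  calc ∫ t in Ioi 0, √(f t) ≤ ∫ t in Ioi 0, g t :=
        integral_mono_of_nonneg (.of_forall fun _ => Real.sqrt_nonneg _) hg
          ((ae_restrict_iff' measurableSet_Ioi).mpr (.of_forall hfg))
    _ = 2 * √(C * a) := by
        rw [integral_indicator measurableSet_Ioc, Measure.restrict_restrict measurableSet_Ioc,
          inter_eq_left.mpr Ioc_subset_Ioi_self, integral_const_mul,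
          integral_Ioc_rpow_neg_half ha, Real.sqrt_mul' _ ha]
        ring

/-- `m_ε'`, the derivative of `m_ε z = (z - iε) / (z + iε)`. -/
noncomputable def mDeriv (ε : ℝ) (z : ℂ) : ℂ := 2 * I * (ε : ℂ) / (z + (ε : ℂ) * I) ^ 2

variable {ε t : ℝ}

theorem norm_mDeriv (hε : 0 ≤ ε) (z : ℂ) : ‖mDeriv ε z‖ = 2 * ε / ‖z + ε * I‖ ^ 2 := by
  simp [mDeriv, abs_of_nonneg hε]

theorem lt_norm_add_mul_I {z : ℂ} (hz : 0 < z.im) : ε < ‖z + ε * I‖ :=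
  calc ε < (z + ε * I).im := by simp [hz]
    _ ≤ ‖z + ε * I‖ := (le_abs_self _).trans (abs_im_le_norm _)

theorem norm_mDeriv_le (hε : 0 < ε) {z : ℂ} (hz : 0 < z.im) : ‖mDeriv ε z‖ ≤ 2 / ε := by
  have hw : ε < ‖z + ε * I‖ := lt_norm_add_mul_I hz
  calc ‖mDeriv ε z‖ = 2 * ε / ‖z + ε * I‖ ^ 2 := norm_mDeriv hε.le z
    _ ≤ 2 * ε / ε ^ 2 := by gcongr
    _ = 2 / ε := by field_simp

theorem setOf_lt_norm_mDeriv_subset_ball (hε : 0 ≤ ε) (ht : 0 < t) :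
    {z : ℂ | t < ‖mDeriv ε z‖} ⊆ Metric.ball (-(ε * I)) √(2 * ε / t) := by
  intro z (hz : t < ‖mDeriv ε z‖)
  rw [norm_mDeriv hε] at hz
  have hw : 0 < ‖z + ε * I‖ := by
    refine (norm_nonneg _).lt_of_ne fun h => ?_
    rw [← h] at hz
    simp only [ne_eq, OfNat.ofNat_ne_zero, not_false_eq_true, zero_pow, div_zero] at hz
    linarith
  rw [Metric.mem_ball, dist_eq, sub_neg_eq_add, Real.lt_sqrt hw.le, lt_div_iff₀ ht]
  rw [lt_div_iff₀ (by positivity)] at hz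
  linarith

theorem volume_superlevel_mDeriv_le (hε : 0 ≤ ε) (ht : 0 < t) :
    (volume {z : ℂ | 0 < z.im ∧ t < ‖mDeriv ε z‖}).toReal ≤ 2 * Real.pi * ε / t := by
  have hball : volume (Metric.ball (-(ε * I)) √(2 * ε / t))
      = ENNReal.ofReal (2 * Real.pi * ε / t) := by
    rw [Complex.volume_ball, ← ENNReal.ofReal_pow (Real.sqrt_nonneg _),
      Real.sq_sqrt (by positivity), ← ENNReal.ofReal_coe_nnreal, NNReal.coe_real_pi,
      ← ENNReal.ofReal_mul (by positivity)]
    ring_nf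
  have hsub : {z : ℂ | 0 < z.im ∧ t < ‖mDeriv ε z‖} ⊆ Metric.ball (-(ε * I)) √(2 * ε / t) :=
    fun z hz => setOf_lt_norm_mDeriv_subset_ball hε ht hz.2
  refine ENNReal.toReal_le_of_le_ofReal (by positivity) ?_
  exact hball ▸ measure_mono hsub

theorem superlevel_mDeriv_eq_empty (hε : 0 < ε) (ht : 2 / ε ≤ t) :
    {z : ℂ | 0 < z.im ∧ t < ‖mDeriv ε z‖} = ∅ :=
  Set.eq_empty_of_forall_notMem fun _ ⟨hz, hzt⟩ =>
    (hzt.trans_le ((norm_mDeriv_le hε hz).trans ht)).false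

/-- The functions `|m_ε'|` are bounded in `L^{2,1}(H)` uniformly in `ε`:
`‖|m_ε'|‖_{L^{2,1}(H)} = 2∫₀^∞ μ(t)^{1/2} dt ≤ 8√π` for all `ε > 0`, where `μ(t)` is the
Lebesgue measure of `{z ∈ H : |m_ε'(z)| > t}`. -/
theorem stmt_7 (ε : ℝ) (hε : 0 < ε) :
    2 * ∫ t in Set.Ioi (0 : ℝ),
        Real.sqrt ((volume {z : ℂ | 0 < z.im ∧
          t < ‖2 * Complex.I * (ε : ℂ) / (z + (ε : ℂ) * Complex.I) ^ 2‖}).toReal)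
      ≤ 8 * Real.sqrt Real.pi := by
  have hL21 : ∫ t in Ioi 0, √(volume {z : ℂ | 0 < z.im ∧ t < ‖mDeriv ε z‖}).toReal
      ≤ 2 * √(2 * Real.pi * ε * (2 / ε)) :=
    integral_sqrt_le_of_le_div (by positivity)
      (fun _ ht => volume_superlevel_mDeriv_le hε.le ht)
      (fun _ ht => by simp [superlevel_mDeriv_eq_empty hε ht.le])
  have hconst : √(2 * Real.pi * ε * (2 / ε)) = 2 * √Real.pi := by
    rw [show 2 * Real.pi * ε * (2 / ε) = 2 ^ 2 * Real.pi by field_simp,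
      Real.sqrt_mul (by norm_num), Real.sqrt_sq (by norm_num)]
  calc _ ≤ 2 * (2 * √(2 * Real.pi * ε * (2 / ε))) := by gcongr; exact hL21
    _ = 8 * √Real.pi := by rw [hconst]; ring
end

section
/- Let E₁ ⊆ E₂ and F₁ ⊆ F₂ be Banach spaces with continuous embeddings, F₁ a Hilbert space, and A : E₂ → F₂ continuous linear. Suppose there is a sequence (x_n) with x_n ∈ E₁, ‖x_n‖_{E₁} ≤ 1, Ax_n ∈ F₁, limsup ‖Ax_n‖_{F₁} = ∞, and each functional f ↦ ⟨Ax_n, f⟩_{F₁} extends continuously to F₂. Then there exists a single x ∈ E₁ such that Ax ∉ F₁, in the sense that there exist ℓ_n ∈ F₂* with ‖ℓ_n‖_{F₁*} ≤ 1 but ℓ_n(Ax) → ∞. -/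
/-!
Call `(z, v, L) ∈ E₁ × F₁ × F₂*` admissible if `A (j z) = i v` and `L ∘ i = ⟪v, ·⟫`. Admissible
triples form a vector space, and for a fixed admissible `p` the functional
`q ↦ ⟪v_p, v_q⟫ = L_p (A (j z_q))` is bounded on `‖z_q‖ ≤ 1`. Passing to the kernel of such a
bounded functional keeps `‖v‖` unbounded over `‖z‖ ≤ 1` (subtract a fixed multiple of a triple on
which the functional is `1`, then rescale), so one can pick admissible `p₀, p₁, …` with
`‖z_k‖ ≤ 1`, `‖v_k‖ ≥ 4^k` and the `v_k` pairwise orthogonal. For `x = ∑ 2^{-k} z_k` and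
`ℓ_k = L_k / ‖v_k‖`, orthogonality gives `ℓ_k (A (j x)) = 2^{-k} ‖v_k‖ ≥ 2^k`, while
`|ℓ_k (i f)| ≤ ‖f‖` by Cauchy–Schwarz.
-/

open Filter
open scoped RealInnerProductSpace

section UnitBall

variable {W E H : Type*} [AddCommGroup W] [Module ℝ W]
  [SeminormedAddCommGroup E] [NormedSpace ℝ E] [SeminormedAddCommGroup H] [NormedSpace ℝ H]

def IsUnboundedOnBall (z : W →ₗ[ℝ] E) (v : W →ₗ[ℝ] H) (S : Submodule ℝ W) : Prop :=
  ∀ R : ℝ, ∃ q ∈ S, ‖z q‖ ≤ 1 ∧ R ≤ ‖v q‖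

variable {z : W →ₗ[ℝ] E} {v : W →ₗ[ℝ] H} {S : Submodule ℝ W}

theorem IsUnboundedOnBall.of_forall_exists {S' : Submodule ℝ W} (hS : IsUnboundedOnBall z v S)
    (M B : ℝ) (h : ∀ q ∈ S, ‖z q‖ ≤ 1 → ∃ q' ∈ S', ‖z q'‖ ≤ M ∧ ‖v q‖ - B ≤ ‖v q'‖) :
    IsUnboundedOnBall z v S' := by
  intro R
  set M' := max M 1
  have hM' : 0 < M' := lt_of_lt_of_le one_pos (le_max_right _ _)
  obtain ⟨q, hqS, hqz, hqv⟩ := hS (M' * R + B)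
  obtain ⟨q', hq'S, hq'z, hq'v⟩ := h q hqS hqz
  refine ⟨M'⁻¹ • q', S'.smul_mem _ hq'S, ?_, ?_⟩
  · rw [map_smul, norm_smul, Real.norm_of_nonneg (inv_nonneg.2 hM'.le), inv_mul_le_iff₀ hM',
      mul_one]
    exact hq'z.trans (le_max_left _ _)
  · rw [map_smul, norm_smul, Real.norm_of_nonneg (inv_nonneg.2 hM'.le), le_inv_mul_iff₀ hM']
    linarith

theorem IsUnboundedOnBall.inf_ker (hS : IsUnboundedOnBall z v S) (φ : W →ₗ[ℝ] ℝ) (C : ℝ)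
    (hφ : ∀ q ∈ S, ‖z q‖ ≤ 1 → |φ q| ≤ C) :
    IsUnboundedOnBall z v (S ⊓ LinearMap.ker φ) := by
  by_cases hker : ∀ q ∈ S, φ q = 0
  · exact hS.of_forall_exists 1 0 fun q hq hqz => ⟨q, ⟨hq, hker q hq⟩, hqz, by simp⟩
  push Not at hker
  obtain ⟨b, hbS, hb⟩ := hker
  obtain ⟨e, heS, he⟩ : ∃ e ∈ S, φ e = 1 := ⟨(φ b)⁻¹ • b, S.smul_mem _ hbS, by simp [hb]⟩
  refine hS.of_forall_exists (1 + C * ‖z e‖) (C * ‖v e‖) fun q hq hqz => ?_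
  have hφq := hφ q hq hqz
  refine ⟨q - φ q • e, ⟨S.sub_mem hq (S.smul_mem _ heS), by simp [he]⟩, ?_, ?_⟩
  · calc ‖z (q - φ q • e)‖ ≤ ‖z q‖ + |φ q| * ‖z e‖ := by
          rw [map_sub, map_smul, ← Real.norm_eq_abs, ← norm_smul (φ q) (z e)]
          exact norm_sub_le _ _
      _ ≤ 1 + C * ‖z e‖ := by gcongr
  · calc ‖v q‖ - C * ‖v e‖ ≤ ‖v q‖ - |φ q| * ‖v e‖ := by gcongr
      _ ≤ ‖v (q - φ q • e)‖ := by
          rw [map_sub, map_smul, ← Real.norm_eq_abs, ← norm_smul (φ q) (v e)]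
          exact norm_sub_norm_le _ _

theorem IsUnboundedOnBall.inf_iInf_ker {ι : Type*} [DecidableEq ι] (hS : IsUnboundedOnBall z v S)
    (φ : ι → W →ₗ[ℝ] ℝ) (C : ι → ℝ) (s : Finset ι)
    (hφ : ∀ i ∈ s, ∀ q ∈ S, ‖z q‖ ≤ 1 → |φ i q| ≤ C i) :
    IsUnboundedOnBall z v (S ⊓ ⨅ i ∈ s, LinearMap.ker (φ i)) := by
  induction s using Finset.induction_on with
  | empty => simpa using hS
  | insert a s _ ih =>
    rw [Finset.iInf_insert, inf_left_comm, inf_comm]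
    exact (ih fun i hi => hφ i (Finset.mem_insert_of_mem hi)).inf_ker (φ a) (C a)
      fun q hq => hφ a (Finset.mem_insert_self a s) q (Submodule.mem_inf.1 hq).1

end UnitBall

section Orthogonal

variable {W E H : Type*} [AddCommGroup W] [Module ℝ W]
  [SeminormedAddCommGroup E] [NormedSpace ℝ E] [SeminormedAddCommGroup H] [InnerProductSpace ℝ H]
  {z : W →ₗ[ℝ] E} {v : W →ₗ[ℝ] H} {S : Submodule ℝ W}

theorem IsUnboundedOnBall.exists_orthogonal_seq (hS : IsUnboundedOnBall z v S)
    (hbdd : ∀ p ∈ S, ∃ C, ∀ q ∈ S, ‖z q‖ ≤ 1 → |⟪v p, v q⟫| ≤ C) :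
    ∃ f : ℕ → W, (∀ n, f n ∈ S ∧ ‖z (f n)‖ ≤ 1 ∧ 4 ^ n ≤ ‖v (f n)‖) ∧
      Pairwise fun m n => ⟪v (f m), v (f n)⟫ = 0 := by
  classical
  choose! C hC using hbdd
  obtain ⟨f, hfP, hfr⟩ := exists_seq_of_forall_finset_exists
    (fun q => q ∈ S ∧ ‖z q‖ ≤ 1 ∧ 1 ≤ ‖v q‖)
    (fun p q => 4 * ‖v p‖ ≤ ‖v q‖ ∧ ⟪v p, v q⟫ = 0) fun s hs => by
      obtain ⟨q, hq, hqz, hqv⟩ := hS.inf_iInf_ker (fun p => innerₛₗ ℝ (v p) ∘ₗ v) C s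
        (fun p hp => hC p (hs p hp).1) (1 + 4 * ∑ p ∈ s, ‖v p‖)
      simp only [Submodule.mem_inf, Submodule.mem_iInf, LinearMap.mem_ker, LinearMap.coe_comp,
        Function.comp_apply, innerₛₗ_apply_apply] at hq
      have hsum : 0 ≤ ∑ p ∈ s, ‖v p‖ := Finset.sum_nonneg fun p _ => norm_nonneg _
      refine ⟨q, ⟨hq.1, hqz, by linarith⟩, fun p hp => ⟨?_, hq.2 p hp⟩⟩
      have := Finset.single_le_sum (fun p _ => norm_nonneg (v p)) hp
      linarith
  have hgrowth : ∀ n, (4 : ℝ) ^ n ≤ ‖v (f n)‖ := by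
    intro n
    induction n with
    | zero => simpa using (hfP 0).2.2
    | succ n ih =>
      calc (4 : ℝ) ^ (n + 1) = 4 * 4 ^ n := by ring
        _ ≤ 4 * ‖v (f n)‖ := by gcongr
        _ ≤ ‖v (f (n + 1))‖ := (hfr n (n + 1) n.lt_succ_self).1
  refine ⟨f, fun n => ⟨(hfP n).1, (hfP n).2.1, hgrowth n⟩, fun m n hmn => ?_⟩
  rcases hmn.lt_or_gt with h | h
  · exact (hfr m n h).2
  · rw [real_inner_comm]; exact (hfr n m h).2

end Orthogonal

section Triples

variable {E G H : Type*} [NormedAddCommGroup E] [NormedSpace ℝ E]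
  [NormedAddCommGroup G] [NormedSpace ℝ G] [NormedAddCommGroup H] [InnerProductSpace ℝ H]
  (T : E →L[ℝ] G) (i : H →L[ℝ] G)

def admissibleTriples : Submodule ℝ (E × H × (G →L[ℝ] ℝ)) where
  carrier := {p | T p.1 = i p.2.1 ∧ ∀ f, p.2.2 (i f) = ⟪p.2.1, f⟫}
  add_mem' := by
    rintro p q ⟨hp, hpL⟩ ⟨hq, hqL⟩
    exact ⟨by simp [hp, hq], fun f => by simp [hpL, hqL, inner_add_left]⟩
  zero_mem' := ⟨by simp, fun f => by simp⟩
  smul_mem' := by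
    rintro c p ⟨hp, hpL⟩
    exact ⟨by simp [hp], fun f => by simp [hpL, real_inner_smul_left]⟩

variable {T i}

theorem inner_eq_apply_of_mem_admissibleTriples {p q : E × H × (G →L[ℝ] ℝ)}
    (hp : p ∈ admissibleTriples T i) (hq : q ∈ admissibleTriples T i) :
    ⟪p.2.1, q.2.1⟫ = p.2.2 (T q.1) := by
  rw [hq.1, hp.2]

theorem abs_inner_le_of_mem_admissibleTriples {p q : E × H × (G →L[ℝ] ℝ)}
    (hp : p ∈ admissibleTriples T i) (hq : q ∈ admissibleTriples T i) :
    |⟪p.2.1, q.2.1⟫| ≤ ‖p.2.2‖ * ‖T‖ * ‖q.1‖ := by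
  rw [inner_eq_apply_of_mem_admissibleTriples hp hq, ← Real.norm_eq_abs, mul_assoc]
  exact (p.2.2.le_opNorm _).trans (by gcongr; exact T.le_opNorm _)

theorem exists_tendsto_atTop_of_orthogonal [CompleteSpace E] (p : ℕ → E × H × (G →L[ℝ] ℝ))
    (hp : ∀ n, p n ∈ admissibleTriples T i ∧ ‖(p n).1‖ ≤ 1 ∧ 4 ^ n ≤ ‖(p n).2.1‖)
    (horth : Pairwise fun m n => ⟪(p m).2.1, (p n).2.1⟫ = 0) :
    ∃ x : E, ∃ ℓ : ℕ → G →L[ℝ] ℝ,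
      (∀ n f, |ℓ n (i f)| ≤ ‖f‖) ∧ Tendsto (fun n => ℓ n (T x)) atTop atTop := by
  have hv : ∀ n, 0 < ‖(p n).2.1‖ := fun n => (pow_pos four_pos n).trans_le (hp n).2.2
  have hsum : Summable fun k => (2 : ℝ)⁻¹ ^ k • (p k).1 := by
    refine .of_norm_bounded
      (summable_geometric_of_lt_one (r := (2 : ℝ)⁻¹) (by norm_num) (by norm_num)) fun k => ?_
    rw [norm_smul, norm_pow, norm_inv, Real.norm_two]
    exact mul_le_of_le_one_right (by positivity) (hp k).2.1
  set x := ∑' k, (2 : ℝ)⁻¹ ^ k • (p k).1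
  have hLx : ∀ n, (p n).2.2 (T x) = (2 : ℝ)⁻¹ ^ n * ‖(p n).2.1‖ ^ 2 := fun n => by
    rw [← ContinuousLinearMap.comp_apply, ContinuousLinearMap.map_tsum _ hsum,
      tsum_eq_single n fun m hmn => ?_]
    · simp [← inner_eq_apply_of_mem_admissibleTriples (hp n).1 (hp n).1]
    · simp [← inner_eq_apply_of_mem_admissibleTriples (hp n).1 (hp m).1, horth hmn.symm]
  refine ⟨x, fun n => ‖(p n).2.1‖⁻¹ • (p n).2.2, fun n f => ?_, ?_⟩
  · rw [smul_apply, smul_eq_mul, (hp n).1.2, abs_mul, abs_inv, abs_norm, inv_mul_le_iff₀ (hv n)]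
    exact abs_real_inner_le_norm _ _
  · refine tendsto_atTop_mono (fun n => ?_) (tendsto_pow_atTop_atTop_of_one_lt one_lt_two)
    calc (2 : ℝ) ^ n = (2 : ℝ)⁻¹ ^ n * 4 ^ n := by rw [← mul_pow]; norm_num
      _ ≤ (2 : ℝ)⁻¹ ^ n * ‖(p n).2.1‖ := by gcongr; exact (hp n).2.2
      _ = (‖(p n).2.1‖⁻¹ • (p n).2.2) (T x) := by
        rw [smul_apply, smul_eq_mul, hLx]; field_simp

end Triples

theorem stmt_17_general
    (E₁ E₂ F₁ F₂ : Type*)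
    [NormedAddCommGroup E₁] [NormedSpace ℝ E₁] [CompleteSpace E₁]
    [NormedAddCommGroup E₂] [NormedSpace ℝ E₂]
    [NormedAddCommGroup F₁] [InnerProductSpace ℝ F₁]
    [NormedAddCommGroup F₂] [NormedSpace ℝ F₂]
    (j : E₁ →L[ℝ] E₂)
    (i : F₁ →L[ℝ] F₂)
    (A : E₂ →L[ℝ] F₂)
    (x : ℕ → E₁) (y : ℕ → F₁)
    (hx : ∀ n, ‖x n‖ ≤ 1)
    (hAx : ∀ n, A (j (x n)) = i (y n))
    (hblow : ¬ BddAbove (Set.range fun n => ‖y n‖))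
    (hext : ∀ n, ∃ L : F₂ →L[ℝ] ℝ, ∀ f : F₁, L (i f) = inner ℝ (y n) f) :
    ∃ x' : E₁, ∃ ℓ : ℕ → F₂ →L[ℝ] ℝ,
      (∀ n, ∀ f : F₁, |ℓ n (i f)| ≤ ‖f‖)
      ∧ Tendsto (fun n => ℓ n (A (j x'))) atTop atTop := by
  have hS : IsUnboundedOnBall (LinearMap.fst ℝ E₁ _)
      (LinearMap.fst ℝ F₁ _ ∘ₗ LinearMap.snd ℝ E₁ _) (admissibleTriples (A.comp j) i) := by
    intro R
    obtain ⟨_, ⟨n, rfl⟩, hn⟩ := not_bddAbove_iff.1 hblow R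
    obtain ⟨L, hL⟩ := hext n
    exact ⟨(x n, y n, L), ⟨hAx n, hL⟩, hx n, hn.le⟩
  obtain ⟨p, hp, horth⟩ := hS.exists_orthogonal_seq fun p hp =>
    ⟨‖p.2.2‖ * ‖A.comp j‖, fun q hq hq1 =>
      (abs_inner_le_of_mem_admissibleTriples hp hq).trans
        (mul_le_of_le_one_right (by positivity) hq1)⟩
  exact exists_tendsto_atTop_of_orthogonal p hp horth

/-- let `E₁ ⊆ E₂`, `F₁ ⊆ F₂` be Banach spaces with continuous embeddings
`j : E₁ ↪ E₂`, `i : F₁ ↪ F₂`, `F₁` a Hilbert space, `A : E₂ → F₂` continuous linear.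
If there is a sequence `xₙ ∈ E₁` with `‖xₙ‖_{E₁} ≤ 1`, `A xₙ ∈ F₁` (say `A xₙ = i yₙ`),
`limsup ‖yₙ‖_{F₁} = ∞`, and each `f ↦ ⟨yₙ, f⟩_{F₁}` extends continuously to `F₂`, then
there is `x ∈ E₁` with `Ax ∉ F₁`, in the sense that there are `ℓₙ ∈ F₂*` with
`‖ℓₙ‖_{F₁*} ≤ 1` but `ℓₙ(Ax) → ∞`. -/
theorem stmt_17
    (E₁ E₂ F₁ F₂ : Type*)
    [NormedAddCommGroup E₁] [NormedSpace ℝ E₁] [CompleteSpace E₁]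
    [NormedAddCommGroup E₂] [NormedSpace ℝ E₂] [CompleteSpace E₂]
    [NormedAddCommGroup F₁] [InnerProductSpace ℝ F₁] [CompleteSpace F₁]
    [NormedAddCommGroup F₂] [NormedSpace ℝ F₂] [CompleteSpace F₂]
    (j : E₁ →L[ℝ] E₂) (hj : Function.Injective j)
    (i : F₁ →L[ℝ] F₂) (hi : Function.Injective i)
    (A : E₂ →L[ℝ] F₂)
    (x : ℕ → E₁) (y : ℕ → F₁)
    (hx : ∀ n, ‖x n‖ ≤ 1)
    (hAx : ∀ n, A (j (x n)) = i (y n))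
    (hblow : ¬ BddAbove (Set.range fun n => ‖y n‖))
    (hext : ∀ n, ∃ L : F₂ →L[ℝ] ℝ, ∀ f : F₁, L (i f) = inner ℝ (y n) f) :
    ∃ x' : E₁, ∃ ℓ : ℕ → F₂ →L[ℝ] ℝ,
      (∀ n, ∀ f : F₁, |ℓ n (i f)| ≤ ‖f‖)
      ∧ Tendsto (fun n => ℓ n (A (j x'))) atTop atTop :=
  stmt_17_general E₁ E₂ F₁ F₂ j i A x y hx hAx hblow hext
end
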